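/- arXiv:2201.10616 — 4 statements merged into one kernel-verified Lean document; each statement's English description precedes it below -/
import Mathlib

section
/- Let B be a unital C*-algebra and let F, F' ∈ B be self-adjoint elements with F² = 1 and F'² = 1, and suppose that FF' + F'F ≥ λ·1 for some real number λ > −2. Then F and F' are homotopic through invertible elements: there exists a norm-continuous path γ : [0,1] → B with γ(0) = F, γ(1) = F', and γ(t) invertible for every t ∈ [0,1] (one may take γ(t) = cos(tπ/2)·F + sin(tπ/2)·F'). -/
/-!
Along the arc `γ t = cos (tπ/2) • F + sin (tπ/2) • F'` the relations `F² = F'² = 1` give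
`(γ t)² = 1 + cs • (FF' + F'F) ≥ (1 + csλ) • 1` with `c, s ≥ 0` and `cs ≤ 1/2`, so `λ > -2` makes
`(γ t)²` bounded below by a positive multiple of `1`, hence invertible, and then so is `γ t`.
-/

open Real Set

theorem smul_add_smul_sq_of_sq_eq_one {R A : Type*} [CommSemiring R] [Semiring A] [Algebra R A]
    {F F' : A} (hF : F ^ 2 = 1) (hF' : F' ^ 2 = 1) (c s : R) :
    (c • F + s • F') ^ 2 = (c ^ 2 + s ^ 2) • (1 : A) + (c * s) • (F * F' + F' * F) := by
  rw [sq] at hF hF' ⊢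
  simp only [add_mul, mul_add, smul_mul_smul, hF, hF', add_smul, smul_add]
  rw [mul_comm s c]
  module

theorem isUnit_smul_add_smul_of_anticommutator_ge {B : Type*} [CStarAlgebra B] [PartialOrder B]
    [StarOrderedRing B] {F F' : B} (hF : F ^ 2 = 1) (hF' : F' ^ 2 = 1) {lam : ℝ}
    (hanti : lam • (1 : B) ≤ F * F' + F' * F) {c s : ℝ} (hcs : 0 ≤ c * s)
    (hpos : 0 < c ^ 2 + s ^ 2 + c * s * lam) : IsUnit (c • F + s • F') := by
  rw [← isUnit_pow_iff two_ne_zero, smul_add_smul_sq_of_sq_eq_one hF hF']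
  refine CStarAlgebra.isUnit_of_le _ ?_ (IsStrictlyPositive.smul hpos isStrictlyPositive_one)
  calc (c ^ 2 + s ^ 2 + c * s * lam) • (1 : B)
      = (c ^ 2 + s ^ 2) • (1 : B) + (c * s) • (lam • (1 : B)) := by rw [add_smul, smul_smul]
    _ ≤ (c ^ 2 + s ^ 2) • (1 : B) + (c * s) • (F * F' + F' * F) := by
      gcongr

theorem cos_mul_sin_mem_Icc {θ : ℝ} (hθ : θ ∈ Icc 0 (π / 2)) :
    cos θ * sin θ ∈ Icc 0 (1 / 2) := by
  have hcos : 0 ≤ cos θ := cos_nonneg_of_mem_Icc ⟨by linarith [hθ.1, pi_pos], hθ.2⟩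
  have hsin : 0 ≤ sin θ := sin_nonneg_of_nonneg_of_le_pi hθ.1 (by linarith [hθ.2, pi_pos])
  refine ⟨mul_nonneg hcos hsin, ?_⟩
  nlinarith [cos_sq_add_sin_sq θ, sq_nonneg (cos θ - sin θ)]

theorem homotopic_through_invertibles_of_anticommutator_bounded_below_general
    {B : Type*} [CStarAlgebra B] [PartialOrder B] [StarOrderedRing B]
    (F F' : B)
    (hF2 : F ^ 2 = 1) (hF'2 : F' ^ 2 = 1)
    (lam : ℝ) (hlam : -2 < lam)
    (hanti : lam • (1 : B) ≤ F * F' + F' * F) :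
    ∃ γ : ℝ → B, Continuous γ ∧ γ 0 = F ∧ γ 1 = F' ∧
      ∀ t ∈ Set.Icc (0 : ℝ) 1, IsUnit (γ t) := by
  refine ⟨fun t ↦ cos (t * (π / 2)) • F + sin (t * (π / 2)) • F', by fun_prop, by simp,
    by simp, fun t ht ↦ ?_⟩
  have hθ : t * (π / 2) ∈ Icc 0 (π / 2) :=
    ⟨by nlinarith [ht.1, pi_pos], by nlinarith [ht.2, pi_pos]⟩
  obtain ⟨hcs, hcs_le⟩ := cos_mul_sin_mem_Icc hθ
  refine isUnit_smul_add_smul_of_anticommutator_ge hF2 hF'2 hanti hcs ?_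
  rw [cos_sq_add_sin_sq]
  nlinarith [mul_le_mul_of_nonneg_left hlam.le hcs]

/-- **Lemma 2.13 (existence form).** In a unital C*-algebra `B`, if `F, F'` are self-adjoint
with `F² = 1`, `F'² = 1` and the anticommutator `F*F' + F'*F` is bounded below by `λ·1` for
some real `λ > -2`, then `F` and `F'` are homotopic through invertible elements of `B`. -/
theorem homotopic_through_invertibles_of_anticommutator_bounded_below
    {B : Type*} [CStarAlgebra B] [PartialOrder B] [StarOrderedRing B]
    (F F' : B) (hF : IsSelfAdjoint F) (hF' : IsSelfAdjoint F')
    (hF2 : F ^ 2 = 1) (hF'2 : F' ^ 2 = 1)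
    (lam : ℝ) (hlam : -2 < lam)
    (hanti : lam • (1 : B) ≤ F * F' + F' * F) :
    ∃ γ : ℝ → B, Continuous γ ∧ γ 0 = F ∧ γ 1 = F' ∧
      ∀ t ∈ Set.Icc (0 : ℝ) 1, IsUnit (γ t) :=
  homotopic_through_invertibles_of_anticommutator_bounded_below_general F F' hF2 hF'2 lam hlam hanti
end

section
/- Let B be a unital C*-algebra and let F, F' ∈ B be self-adjoint elements with F² = 1 and F'² = 1, and suppose that FF' + F'F ≥ λ·1 for some real number λ > −2. Then F and F' are connected by a norm-continuous path of self-adjoint unitary elements of B; explicitly, the path t ↦ sgn(cos(t)·F + sin(t)·F'), for t ∈ [0, π/2], is norm-continuous, consists of self-adjoint unitaries, and joins F to F'. -/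
/-!
Write `a t = cos t • F + sin t • F'`. From `F ^ 2 = F' ^ 2 = 1`,
`a t ^ 2 = 1 + (sin t cos t) • (F F' + F' F) ≥ 1 + sin t cos t · λ`, and this is positive since
`0 ≤ sin t cos t ≤ 1/2` and `λ > -2`. Hence `0 ∉ σ(a t)`, so `sgn (a t)` squares to `1` and is a
self-adjoint unitary; it is continuous in `t` because `sgn` is continuous on the open set `{0}ᶜ`,
which contains every `σ(a t)`. At the endpoints `a t` is `F` or `F'`, whose spectrum lies in
`{1, -1}`, where `sgn` is the identity.
-/

namespace Real

lemma continuousOn_sign : ContinuousOn Real.sign {0}ᶜ := by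
  intro x hx
  refine ContinuousAt.continuousWithinAt ?_
  rcases lt_or_gt_of_ne hx with h | h
  · exact continuousAt_const.congr <|
      Filter.eventually_of_mem (Iio_mem_nhds h) fun y hy => (sign_of_neg hy).symm
  · exact continuousAt_const.congr <|
      Filter.eventually_of_mem (Ioi_mem_nhds h) fun y hy => (sign_of_pos hy).symm

lemma sign_mul_self_of_ne_zero {x : ℝ} (hx : x ≠ 0) : sign x * sign x = 1 := by
  rcases sign_apply_eq_of_ne_zero x hx with h | h <;> simp [h]

lemma sign_eq_self_of_sq_eq_one {x : ℝ} (hx : x ^ 2 = 1) : sign x = x := by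
  rcases sq_eq_one_iff.mp hx with rfl | rfl
  · exact sign_one
  · exact sign_of_neg (by norm_num)

lemma sin_mul_cos_mem_Icc {t : ℝ} (ht : t ∈ Set.Icc 0 (π / 2)) :
    sin t * cos t ∈ Set.Icc 0 (1 / 2) := by
  refine ⟨mul_nonneg (sin_nonneg_of_nonneg_of_le_pi ht.1 (by linarith [ht.2, pi_pos]))
    (cos_nonneg_of_mem_Icc ⟨by linarith [ht.1, pi_pos], ht.2⟩), ?_⟩
  linarith [sin_two_mul t, sin_le_one (2 * t)]

end Real

lemma smul_add_smul_sq {R A : Type*} [CommRing R] [Ring A] [Algebra R A] {F F' : A}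
    (hF : F ^ 2 = 1) (hF' : F' ^ 2 = 1) (c s : R) :
    (c • F + s • F') ^ 2 = algebraMap R A (c ^ 2 + s ^ 2) + (c * s) • (F * F' + F' * F) := by
  rw [sq, sq] at *
  simp only [add_mul, mul_add, smul_mul_smul_comm, hF, hF', Algebra.algebraMap_eq_smul_one]
  module

section CStarAlgebra

variable {A : Type*} [CStarAlgebra A]

lemma cfc_sign_of_sq_eq_one {a : A} (ha : IsSelfAdjoint a) (ha2 : a ^ 2 = 1) :
    cfc Real.sign a = a := by
  nontriviality A
  refine (cfc_congr fun x hx => Real.sign_eq_self_of_sq_eq_one ?_).trans (cfc_id ℝ a ha)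
  simpa [ha2, spectrum.one_eq] using spectrum.pow_mem_pow a 2 hx

lemma cfc_sign_mem_unitary {a : A} (ha : IsSelfAdjoint a) (h0 : 0 ∉ spectrum ℝ a) :
    cfc Real.sign a ∈ unitary A :=
  (cfc_unitary_iff Real.sign a ha (Real.continuousOn_sign.mono fun _ hx h => h0 (h ▸ hx))).mpr
    fun _ hx => Real.sign_mul_self_of_ne_zero fun h => h0 (h ▸ hx)

variable [PartialOrder A] [StarOrderedRing A]

lemma IsSelfAdjoint.zero_notMem_spectrum_of_algebraMap_le_sq {a : A} (ha : IsSelfAdjoint a)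
    {c : ℝ} (hc : 0 < c) (h : algebraMap ℝ A c ≤ a ^ 2) : 0 ∉ spectrum ℝ a := by
  rw [← cfc_pow_id (R := ℝ) a 2 ha, algebraMap_le_cfc_iff (· ^ 2) c a] at h
  exact fun h0 => by simpa using hc.trans_le (h 0 h0)

lemma algebraMap_one_add_mul_le {K : A} {lam σ : ℝ} (hK : lam • (1 : A) ≤ K) (hσ : 0 ≤ σ) :
    algebraMap ℝ A (1 + σ * lam) ≤ 1 + σ • K := by
  rw [map_add, map_one, Algebra.algebraMap_eq_smul_one, mul_smul]
  exact add_le_add_right (smul_le_smul_of_nonneg_left hK hσ) 1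

end CStarAlgebra

/-- **Lemma 2.13 (explicit form).** In a unital C*-algebra `B`, if `F, F'` are self-adjoint
with `F² = 1`, `F'² = 1` and the anticommutator `F*F' + F'*F` is bounded below by `λ·1` for
some real `λ > -2`, then the path `t ↦ sgn(cos t • F + sin t • F')`, `t ∈ [0, π/2]`
(where `sgn` is the continuous functional calculus with the sign function), is norm-continuous,
consists of self-adjoint unitaries, and joins `F` to `F'`. -/
theorem sign_path_selfAdjoint_unitary_homotopy
    {B : Type*} [CStarAlgebra B] [PartialOrder B] [StarOrderedRing B]
    (F F' : B) (hF : IsSelfAdjoint F) (hF' : IsSelfAdjoint F')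
    (hF2 : F ^ 2 = 1) (hF'2 : F' ^ 2 = 1)
    (lam : ℝ) (hlam : -2 < lam)
    (hanti : lam • (1 : B) ≤ F * F' + F' * F)
    (g : ℝ → B)
    (hg : g = fun t => cfc Real.sign (Real.cos t • F + Real.sin t • F')) :
    ContinuousOn g (Set.Icc 0 (Real.pi / 2)) ∧
      g 0 = F ∧ g (Real.pi / 2) = F' ∧
      ∀ t ∈ Set.Icc (0 : ℝ) (Real.pi / 2),
        IsSelfAdjoint (g t) ∧ g t ∈ unitary B := by
  subst hg
  have hsa (t : ℝ) : IsSelfAdjoint (Real.cos t • F + Real.sin t • F') :=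
    ((IsSelfAdjoint.all _).smul hF).add ((IsSelfAdjoint.all _).smul hF')
  have hgap : ∀ t ∈ Set.Icc 0 (Real.pi / 2),
      0 ∉ spectrum ℝ (Real.cos t • F + Real.sin t • F') := by
    intro t ht
    obtain ⟨hσ0, hσ1⟩ := Real.sin_mul_cos_mem_Icc ht
    refine (hsa t).zero_notMem_spectrum_of_algebraMap_le_sq
      (c := 1 + Real.sin t * Real.cos t * lam)
      (by rcases le_total 0 lam with h | h <;> nlinarith) ?_
    rw [smul_add_smul_sq hF2 hF'2, Real.cos_sq_add_sin_sq, map_one, mul_comm (Real.cos t)]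
    exact algebraMap_one_add_mul_le hanti hσ0
  refine ⟨?_, by simpa using cfc_sign_of_sq_eq_one hF hF2,
    by simpa using cfc_sign_of_sq_eq_one hF' hF'2,
    fun t ht => ⟨cfc_predicate _ _, cfc_sign_mem_unitary (hsa t) (hgap t ht)⟩⟩
  refine ContinuousOn.cfc_of_mem_nhdsSet Real.sign ?_ (by fun_prop) (fun t _ => hsa t)
    Real.continuousOn_sign
  exact isOpen_compl_singleton.mem_nhdsSet.mpr <| Set.iUnion₂_subset fun t ht x hx h =>
    hgap t ht (h ▸ hx)
end

section
/- Let B be a unital C*-algebra, let 𝒜 ⊆ B be a unital C*-subalgebra, and let J ⊆ 𝒜 be a closed two-sided ideal of 𝒜. Let F, F' ∈ 𝒜 satisfy F − F* ∈ J, F² − 1 ∈ J, F' − F'* ∈ J, F'² − 1 ∈ J. Suppose FF' + F'F = P + K, where P ∈ 𝒜 is self-adjoint with P ≥ λ·1 in B for some real λ > −2, and K ∈ J. Then: (i) for every t ∈ [0, π/2] the element 1 + sin(t)cos(t)·P is positive and invertible in B, and its inverse square root lies in 𝒜; (ii) the elements G_t := (1 + sin(t)cos(t)·P)^{−1/2}·(cos(t)·F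 + sin(t)·F') belong to 𝒜 and satisfy G_t − G_t* ∈ J and G_t² − 1 ∈ J for every t ∈ [0, π/2]; (iii) the map t ↦ G_t is norm-continuous with G_0 = F and G_{π/2} = F'. In particular, F and F' are joined, within 𝒜 and modulo J, by the norm-continuous path (G_t). -/
/-!
Since `FF' + F'F = P` modulo `J` and `F² = F'² = 1` modulo `J`, the element `P` commutes with
`F` and `F'` modulo `J`, and `V_t := cos t • F + sin t • F'` satisfies
`V_t² = 1 + sin t cos t • P` modulo `J`. The bound `P ≥ λ > -2` together with
`0 ≤ sin t cos t ≤ 1/2` makes `X_t := 1 + sin t cos t • P` strictly positive, so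
`R_t := X_t^{-1/2}` is defined by the continuous functional calculus. The elements of `𝒜` that
commute with `F` and `F'` modulo `J` form a closed subalgebra containing `X_t`, hence `R_t`; so
`G_t = R_t V_t` satisfies `G_t² = R_t² V_t² = R_t² X_t = 1` modulo `J`. Continuity in `t` follows
from the continuity of the functional calculus in its argument.
-/

open Set

lemma cfc_mem_of_isClosed {A : Type*} [CStarAlgebra A] {S : Subalgebra ℝ A}
    (hS : IsClosed (S : Set A)) (f : ℝ → ℝ) {a : A} (ha : IsSelfAdjoint a) (haS : a ∈ S) :
    cfc f a ∈ S :=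
  StarAlgebra.elemental.induction_on ℝ (cfc_mem_elemental f a) (P := fun u _ => u ∈ S) haS
    (by rwa [ha.star_eq]) S.algebraMap_mem (fun _ _ _ _ => add_mem) (fun _ _ _ _ => mul_mem)
    fun _ _ ih _ hv => closure_minimal (fun u hu => ih u hu) hS hv

section InvSqrt

variable {A : Type*} [CStarAlgebra A] [PartialOrder A] [StarOrderedRing A]

lemma isStrictlyPositive_one_add_smul {P : A} {lam s : ℝ} (hP : lam • (1 : A) ≤ P)
    (hs : 0 ≤ s) (h : 0 < 1 + s * lam) : IsStrictlyPositive (1 + s • P) :=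
  (isStrictlyPositive_algebraMap h).of_le <| by
    rw [Algebra.algebraMap_eq_smul_one, add_smul, one_smul, mul_smul]
    gcongr

lemma cfc_inv_sqrt_mul_self_mul_self {a : A} (ha : IsStrictlyPositive a) :
    cfc (fun x : ℝ => (√x)⁻¹) a * cfc (fun x : ℝ => (√x)⁻¹) a * a = 1 := by
  have hpos := (StarOrderedRing.isStrictlyPositive_iff_spectrum_pos (R := ℝ) a).mp ha
  have hcont : ContinuousOn (fun x : ℝ => (√x)⁻¹) (spectrum ℝ a) :=
    ContinuousOn.inv₀ (by fun_prop) fun x hx => (Real.sqrt_pos.mpr (hpos x hx)).ne'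
  calc _ = cfc (fun x : ℝ => (√x)⁻¹ * (√x)⁻¹ * x) a := by
          rw [cfc_mul .., cfc_mul .., cfc_id' ℝ a]
    _ = cfc (1 : ℝ → ℝ) a := cfc_congr fun x hx => by
          have hx := hpos x hx
          rw [← mul_inv, Real.mul_self_sqrt hx.le, inv_mul_cancel₀ hx.ne', Pi.one_apply]
    _ = 1 := cfc_one ℝ a

lemma ContinuousOn.cfc_inv_sqrt {X : Type*} [TopologicalSpace X] {a : X → A} {s : Set X}
    (ha : ContinuousOn a s) (ha_pos : ∀ x ∈ s, IsStrictlyPositive (a x)) :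
    ContinuousOn (fun x => cfc (fun y : ℝ => (√y)⁻¹) (a x)) s := by
  have hspec : (⋃ x ∈ s, spectrum ℝ (a x)) ⊆ Ioi 0 := iUnion₂_subset fun x hx =>
    (StarOrderedRing.isStrictlyPositive_iff_spectrum_pos (R := ℝ) (a x)).mp (ha_pos x hx)
  exact ha.cfc_of_mem_nhdsSet _ (isOpen_Ioi.mem_nhdsSet.mpr hspec)
    (fun x hx => (ha_pos x hx).isSelfAdjoint)
    (ContinuousOn.inv₀ (by fun_prop) fun y hy => (Real.sqrt_pos.mpr hy).ne')

end InvSqrt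

namespace AddSubgroup

variable {R B : Type*} [CommRing R] [Ring B] [Algebra R B]

/-- `J` is a two-sided ideal of the subalgebra `A`, except that `J ⊆ A` is not required. -/
structure IsTwoSidedIn (J : AddSubgroup B) (A : Subalgebra R B) : Prop where
  mul_mem_left : ∀ a ∈ A, ∀ x ∈ J, a * x ∈ J
  mul_mem_right : ∀ a ∈ A, ∀ x ∈ J, x * a ∈ J

namespace IsTwoSidedIn

variable {J : AddSubgroup B} {A : Subalgebra R B}

lemma smul_mem (hJ : J.IsTwoSidedIn A) (r : R) {x : B} (hx : x ∈ J) : r • x ∈ J := by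
  simpa only [Algebra.smul_def] using hJ.mul_mem_left _ (A.algebraMap_mem r) x hx

/-- The elements of `A` commuting with `x` modulo `J`. -/
def commutant (hJ : J.IsTwoSidedIn A) (x : B) : Subalgebra R B where
  carrier := {b | b ∈ A ∧ b * x - x * b ∈ J}
  mul_mem' := by
    rintro a b ⟨ha, hax⟩ ⟨hb, hbx⟩
    refine ⟨mul_mem ha hb, ?_⟩
    rw [show a * b * x - x * (a * b) = a * (b * x - x * b) + (a * x - x * a) * b by noncomm_ring]
    exact add_mem (hJ.mul_mem_left a ha _ hbx) (hJ.mul_mem_right b hb _ hax)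
  add_mem' := by
    rintro a b ⟨ha, hax⟩ ⟨hb, hbx⟩
    refine ⟨add_mem ha hb, ?_⟩
    rw [show (a + b) * x - x * (a + b) = (a * x - x * a) + (b * x - x * b) by noncomm_ring]
    exact add_mem hax hbx
  algebraMap_mem' r := ⟨A.algebraMap_mem r, by simp [Algebra.commutes]⟩

lemma isClosed_commutant [TopologicalSpace B] [IsTopologicalRing B] (hJ : J.IsTwoSidedIn A)
    (hA : IsClosed (A : Set B)) (hJc : IsClosed (J : Set B)) (x : B) :
    IsClosed (hJ.commutant x : Set B) :=
  hA.inter (hJc.preimage (by fun_prop))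

lemma commutant_inf_commutant_le (hJ : J.IsTwoSidedIn A) (x y : B) (c s : R) :
    hJ.commutant x ⊓ hJ.commutant y ≤ hJ.commutant (c • x + s • y) := by
  rintro b ⟨⟨hb, hbx⟩, -, hby⟩
  refine ⟨hb, ?_⟩
  rw [show b * (c • x + s • y) - (c • x + s • y) * b = c • (b * x - x * b) + s • (b * y - y * b) by
    simp only [mul_add, add_mul, mul_smul_comm, smul_mul_assoc, smul_sub]; abel]
  exact add_mem (hJ.smul_mem c hbx) (hJ.smul_mem s hby)

lemma commutator_mem_of_anticommutator (hJ : J.IsTwoSidedIn A) {F F' P K : B} (hF : F ∈ A)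
    (hF' : F' ∈ A) (hF2 : F ^ 2 - 1 ∈ J) (hK : K ∈ J) (h : F * F' + F' * F = P + K) :
    P * F - F * P ∈ J := by
  obtain rfl : P = F * F' + F' * F - K := by rw [h]; abel
  rw [show (F * F' + F' * F - K) * F - F * (F * F' + F' * F - K) =
      (F' * (F ^ 2 - 1) - (F ^ 2 - 1) * F') + (F * K - K * F) by noncomm_ring]
  exact add_mem (sub_mem (hJ.mul_mem_left F' hF' _ hF2) (hJ.mul_mem_right F' hF' _ hF2))
    (sub_mem (hJ.mul_mem_left F hF _ hK) (hJ.mul_mem_right F hF _ hK))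

lemma smul_add_smul_sq_sub_mem (hJ : J.IsTwoSidedIn A) {F F' P K : B} {c s : R}
    (hcs : c ^ 2 + s ^ 2 = 1) (hF2 : F ^ 2 - 1 ∈ J) (hF'2 : F' ^ 2 - 1 ∈ J) (hK : K ∈ J)
    (h : F * F' + F' * F = P + K) : (c • F + s • F') ^ 2 - (1 + (s * c) • P) ∈ J := by
  have h1 : (c ^ 2 + s ^ 2) • (1 : B) = 1 := by rw [hcs, one_smul]
  rw [show (c • F + s • F') ^ 2 - (1 + (s * c) • P) =
      c ^ 2 • (F ^ 2 - 1) + s ^ 2 • (F' ^ 2 - 1) + (s * c) • K by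
    simp only [sq, add_mul, mul_add, smul_mul_smul_comm]
    linear_combination (norm := module) (s * c) • h + h1]
  exact add_mem (add_mem (hJ.smul_mem _ hF2) (hJ.smul_mem _ hF'2)) (hJ.smul_mem _ hK)

lemma smul_add_smul_sub_star_mem [StarRing R] [TrivialStar R] [StarRing B] [StarModule R B]
    (hJ : J.IsTwoSidedIn A) {F F' : B} (c s : R) (hF : F - star F ∈ J)
    (hF' : F' - star F' ∈ J) : c • F + s • F' - star (c • F + s • F') ∈ J := by
  rw [show c • F + s • F' - star (c • F + s • F') = c • (F - star F) + s • (F' - star F') by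
    simp only [star_add, star_smul, star_trivial, smul_sub]; abel]
  exact add_mem (hJ.smul_mem c hF) (hJ.smul_mem s hF')

lemma mul_sub_star_mem [StarRing B] (hJ : J.IsTwoSidedIn A) {a v : B} (ha : a ∈ A)
    (ha_sa : IsSelfAdjoint a) (hav : a * v - v * a ∈ J) (hv : v - star v ∈ J) :
    a * v - star (a * v) ∈ J := by
  rw [star_mul, ha_sa.star_eq,
    show a * v - star v * a = (a * v - v * a) + (v - star v) * a by noncomm_ring]
  exact add_mem hav (hJ.mul_mem_right a ha _ hv)

lemma mul_sq_sub_one_mem (hJ : J.IsTwoSidedIn A) {a v x : B} (ha : a ∈ A) (hv : v ∈ A)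
    (hav : a * v - v * a ∈ J) (hax : a * a * x = 1) (hvx : v ^ 2 - x ∈ J) :
    (a * v) ^ 2 - 1 ∈ J := by
  rw [show (a * v) ^ 2 - 1 = a * a * (v ^ 2 - x) - a * (a * v - v * a) * v + (a * a * x - 1) by
    noncomm_ring, hax, sub_self, add_zero]
  exact sub_mem (hJ.mul_mem_left _ (mul_mem ha ha) _ hvx)
    (hJ.mul_mem_right v hv _ (hJ.mul_mem_left a ha _ hav))

end IsTwoSidedIn

end AddSubgroup

lemma Real.sin_mul_cos_nonneg {t : ℝ} (ht : t ∈ Icc 0 (Real.pi / 2)) : 0 ≤ sin t * cos t :=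
  mul_nonneg (sin_nonneg_of_nonneg_of_le_pi ht.1 (by linarith [ht.2, pi_pos]))
    (cos_nonneg_of_mem_Icc ⟨by linarith [ht.1, pi_pos], ht.2⟩)

lemma Real.sin_mul_cos_le_half (t : ℝ) : sin t * cos t ≤ 1 / 2 := by
  nlinarith [sq_nonneg (sin t - cos t), sin_sq_add_cos_sq t]

theorem skandalis_CS_path_general
    {B : Type*} [CStarAlgebra B] [PartialOrder B] [StarOrderedRing B]
    (𝒜 : StarSubalgebra ℂ B) (h𝒜 : IsClosed (𝒜 : Set B))
    (J : Set B) (hJclosed : IsClosed J)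
    (hJ0 : (0 : B) ∈ J) (hJadd : ∀ x ∈ J, ∀ y ∈ J, x + y ∈ J)
    (hJneg : ∀ x ∈ J, -x ∈ J)
    (hJmul_left : ∀ a ∈ 𝒜, ∀ x ∈ J, a * x ∈ J)
    (hJmul_right : ∀ a ∈ 𝒜, ∀ x ∈ J, x * a ∈ J)
    (F F' P K : B) (hF𝒜 : F ∈ 𝒜) (hF'𝒜 : F' ∈ 𝒜)
    (hFstar : F - star F ∈ J) (hF2 : F ^ 2 - 1 ∈ J)
    (hF'star : F' - star F' ∈ J) (hF'2 : F' ^ 2 - 1 ∈ J)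
    (hP𝒜 : P ∈ 𝒜)
    (lam : ℝ) (hlam : -2 < lam) (hPlower : lam • (1 : B) ≤ P)
    (hK : K ∈ J) (hdecomp : F * F' + F' * F = P + K)
    (G : ℝ → B)
    (hG : G = fun t =>
      cfc (fun x : ℝ => (Real.sqrt x)⁻¹) (1 + (Real.sin t * Real.cos t) • P) *
        (Real.cos t • F + Real.sin t • F')) :
    -- (i) positivity, invertibility, and membership of the inverse square root in `𝒜`
    (∀ t ∈ Set.Icc (0 : ℝ) (Real.pi / 2),
      (0 : B) ≤ 1 + (Real.sin t * Real.cos t) • P ∧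
      IsUnit (1 + (Real.sin t * Real.cos t) • P) ∧
      cfc (fun x : ℝ => (Real.sqrt x)⁻¹) (1 + (Real.sin t * Real.cos t) • P) ∈ 𝒜) ∧
    -- (ii) the path lies in `𝒜` and is self-adjoint and involutive modulo `J`
    (∀ t ∈ Set.Icc (0 : ℝ) (Real.pi / 2),
      G t ∈ 𝒜 ∧ G t - star (G t) ∈ J ∧ (G t) ^ 2 - 1 ∈ J) ∧
    -- (iii) norm-continuity and endpoints
    ContinuousOn G (Set.Icc (0 : ℝ) (Real.pi / 2)) ∧
      G 0 = F ∧ G (Real.pi / 2) = F' := by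
  let A : Subalgebra ℝ B := 𝒜.toSubalgebra.restrictScalars ℝ
  let J' : AddSubgroup B :=
    { carrier := J, zero_mem' := hJ0, add_mem' := fun hx hy => hJadd _ hx _ hy,
      neg_mem' := fun hx => hJneg _ hx }
  have hJ : J'.IsTwoSidedIn A := ⟨hJmul_left, hJmul_right⟩
  let S := hJ.commutant F ⊓ hJ.commutant F'
  have hS : IsClosed (S : Set B) :=
    (hJ.isClosed_commutant h𝒜 hJclosed F).inter (hJ.isClosed_commutant h𝒜 hJclosed F')
  have hPS : P ∈ S :=
    ⟨⟨hP𝒜, hJ.commutator_mem_of_anticommutator hF𝒜 hF'𝒜 hF2 hK hdecomp⟩,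
      ⟨hP𝒜, hJ.commutator_mem_of_anticommutator hF'𝒜 hF𝒜 hF'2 hK (by rw [add_comm, hdecomp])⟩⟩
  have hX (t : ℝ) (ht : t ∈ Set.Icc 0 (Real.pi / 2)) :
      IsStrictlyPositive (1 + (Real.sin t * Real.cos t) • P) :=
    isStrictlyPositive_one_add_smul hPlower (Real.sin_mul_cos_nonneg ht) <| by
      have := Real.sin_mul_cos_nonneg ht
      have := Real.sin_mul_cos_le_half t
      rcases le_total 0 lam with hlam0 | hlam0 <;> nlinarith
  have hR (t : ℝ) (ht : t ∈ Set.Icc 0 (Real.pi / 2)) :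
      cfc (fun x : ℝ => (Real.sqrt x)⁻¹) (1 + (Real.sin t * Real.cos t) • P) ∈ S :=
    cfc_mem_of_isClosed hS _ (hX t ht).isSelfAdjoint (add_mem (one_mem S) (S.smul_mem hPS _))
  subst hG
  refine ⟨fun t ht => ⟨(hX t ht).nonneg, (hX t ht).isUnit, (hR t ht).1.1⟩,
    fun t ht => ?_, ?_, by simp, by simp⟩
  · have hRV := hJ.commutant_inf_commutant_le F F' (Real.cos t) (Real.sin t) (hR t ht)
    have hV : Real.cos t • F + Real.sin t • F' ∈ A :=
      add_mem (A.smul_mem hF𝒜 _) (A.smul_mem hF'𝒜 _)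
    exact ⟨mul_mem hRV.1 hV,
      hJ.mul_sub_star_mem hRV.1 (cfc_predicate _ _) hRV.2
        (hJ.smul_add_smul_sub_star_mem _ _ hFstar hF'star),
      hJ.mul_sq_sub_one_mem hRV.1 hV hRV.2 (cfc_inv_sqrt_mul_self_mul_self (hX t ht))
        (hJ.smul_add_smul_sq_sub_mem (Real.cos_sq_add_sin_sq t) hF2 hF'2 hK hdecomp)⟩
  · exact (ContinuousOn.cfc_inv_sqrt (by fun_prop) hX).mul (by fun_prop)

/-- **Lemma 2.12 (Skandalis's Lemma 11), C*-algebraic content.** Let `B` be a unital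
C*-algebra, `𝒜 ⊆ B` a closed unital *-subalgebra and `J ⊆ 𝒜` a closed two-sided ideal of `𝒜`.
If `F, F' ∈ 𝒜` are self-adjoint and involutive modulo `J`, and `F*F' + F'*F = P + K` with
`P ∈ 𝒜` self-adjoint, `P ≥ λ·1` for some `λ > -2`, and `K ∈ J`, then the path
`G_t = (1 + sin t cos t • P)^{-1/2} (cos t • F + sin t • F')` stays in `𝒜`, is self-adjoint
and involutive modulo `J`, is norm-continuous, and joins `F` to `F'`. -/
theorem skandalis_CS_path
    {B : Type*} [CStarAlgebra B] [PartialOrder B] [StarOrderedRing B]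
    (𝒜 : StarSubalgebra ℂ B) (h𝒜 : IsClosed (𝒜 : Set B))
    (J : Set B) (hJsub : J ⊆ (𝒜 : Set B)) (hJclosed : IsClosed J)
    (hJ0 : (0 : B) ∈ J) (hJadd : ∀ x ∈ J, ∀ y ∈ J, x + y ∈ J)
    (hJneg : ∀ x ∈ J, -x ∈ J)
    (hJmul_left : ∀ a ∈ 𝒜, ∀ x ∈ J, a * x ∈ J)
    (hJmul_right : ∀ a ∈ 𝒜, ∀ x ∈ J, x * a ∈ J)
    (F F' P K : B) (hF𝒜 : F ∈ 𝒜) (hF'𝒜 : F' ∈ 𝒜)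
    (hFstar : F - star F ∈ J) (hF2 : F ^ 2 - 1 ∈ J)
    (hF'star : F' - star F' ∈ J) (hF'2 : F' ^ 2 - 1 ∈ J)
    (hP𝒜 : P ∈ 𝒜) (hPsa : IsSelfAdjoint P)
    (lam : ℝ) (hlam : -2 < lam) (hPlower : lam • (1 : B) ≤ P)
    (hK : K ∈ J) (hdecomp : F * F' + F' * F = P + K)
    (G : ℝ → B)
    (hG : G = fun t =>
      cfc (fun x : ℝ => (Real.sqrt x)⁻¹) (1 + (Real.sin t * Real.cos t) • P) *
        (Real.cos t • F + Real.sin t • F')) :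
    -- (i) positivity, invertibility, and membership of the inverse square root in `𝒜`
    (∀ t ∈ Set.Icc (0 : ℝ) (Real.pi / 2),
      (0 : B) ≤ 1 + (Real.sin t * Real.cos t) • P ∧
      IsUnit (1 + (Real.sin t * Real.cos t) • P) ∧
      cfc (fun x : ℝ => (Real.sqrt x)⁻¹) (1 + (Real.sin t * Real.cos t) • P) ∈ 𝒜) ∧
    -- (ii) the path lies in `𝒜` and is self-adjoint and involutive modulo `J`
    (∀ t ∈ Set.Icc (0 : ℝ) (Real.pi / 2),
      G t ∈ 𝒜 ∧ G t - star (G t) ∈ J ∧ (G t) ^ 2 - 1 ∈ J) ∧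
    -- (iii) norm-continuity and endpoints
    ContinuousOn G (Set.Icc (0 : ℝ) (Real.pi / 2)) ∧
      G 0 = F ∧ G (Real.pi / 2) = F' :=
  skandalis_CS_path_general 𝒜 h𝒜 J hJclosed hJ0 hJadd hJneg hJmul_left hJmul_right F F' P K hF𝒜 hF'𝒜
    hFstar hF2 hF'star hF'2 hP𝒜 lam hlam hPlower hK hdecomp G hG
end

section
/- Let B be a unital C*-algebra and let F, F' ∈ B be self-adjoint elements with F² = 1 and F'² = 1, and suppose FF' + F'F ≥ λ·1 for some real number λ > −2. Set μ := min(λ, 0) and r := √(1 + μ/2) > 0. Then for every t ∈ [0, π/2], the element c_t := cos(t)·F + sin(t)·F' is self-adjoint, satisfies c_t² ≥ r²·1, is invertible, and its spectrum is disjoint from the open interval (−r, r); that is, c_t has a uniform spectral gap around 0. -/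
section Aux

variable {B : Type*} [CStarAlgebra B] [PartialOrder B] [StarOrderedRing B]

private lemma aux_smul_one_nonneg {s : ℝ} (hs : 0 ≤ s) : (0 : B) ≤ s • (1 : B) := by
  have h := star_mul_self_nonneg ((Real.sqrt s) • (1 : B))
  have : star ((Real.sqrt s) • (1 : B)) * ((Real.sqrt s) • (1 : B)) = s • (1 : B) := by
    simp [star_smul, smul_mul_smul_comm, smul_smul, Real.mul_self_sqrt hs]
  rwa [this] at h

private lemma aux_smul_nonneg {s : ℝ} (hs : 0 ≤ s) {x : B} (hx : 0 ≤ x) :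
    (0 : B) ≤ s • x := by
  have h := star_left_conjugate_nonneg hx ((Real.sqrt s) • (1 : B))
  have : star ((Real.sqrt s) • (1 : B)) * x * ((Real.sqrt s) • (1 : B)) = s • x := by
    simp [star_smul, smul_mul_assoc, mul_smul_comm, smul_smul, Real.mul_self_sqrt hs]
  rwa [this] at h

end Aux

/-- **Spectral gap claim of Lemma 2.13.** Let `F, F'` be self-adjoint elements of a unital
C*-algebra with `F² = 1`, `F'² = 1` and `F F' + F' F ≥ λ·1` for some `λ > -2`.  Set
`μ := min λ 0` and `r := √(1 + μ/2) > 0`.  Then for every `t ∈ [0, π/2]` the element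
`c_t := cos t • F + sin t • F'` is self-adjoint, satisfies `c_t² ≥ r²·1`, is invertible,
and its spectrum misses the open interval `(-r, r)`. -/
theorem spectral_gap_of_cos_sin_path
    {B : Type*} [CStarAlgebra B] [PartialOrder B] [StarOrderedRing B]
    (F F' : B) (hF : IsSelfAdjoint F) (hF' : IsSelfAdjoint F')
    (hF2 : F ^ 2 = 1) (hF'2 : F' ^ 2 = 1)
    (lam : ℝ) (hlam : -2 < lam)
    (hanti : lam • (1 : B) ≤ F * F' + F' * F)
    (mu r : ℝ) (hmu : mu = min lam 0) (hr : r = Real.sqrt (1 + mu / 2)) :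
    0 < r ∧
    ∀ t ∈ Set.Icc (0 : ℝ) (Real.pi / 2),
      IsSelfAdjoint (Real.cos t • F + Real.sin t • F') ∧
      (r ^ 2) • (1 : B) ≤ (Real.cos t • F + Real.sin t • F') ^ 2 ∧
      IsUnit (Real.cos t • F + Real.sin t • F') ∧
      spectrum ℝ (Real.cos t • F + Real.sin t • F') ∩ Set.Ioo (-r) r = ∅ := by
  have hmu2 : -2 < mu := by rw [hmu]; exact lt_min hlam (by norm_num)
  have hmu0 : mu ≤ 0 := by rw [hmu]; exact min_le_right _ _
  have hmulam : mu ≤ lam := by rw [hmu]; exact min_le_left _ _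
  have h1 : (0 : ℝ) < 1 + mu / 2 := by linarith
  have hrpos : 0 < r := by rw [hr]; exact Real.sqrt_pos.mpr h1
  have hr2 : r ^ 2 = 1 + mu / 2 := by rw [hr, sq, Real.mul_self_sqrt h1.le]
  refine ⟨hrpos, fun t ht => ?_⟩
  obtain ⟨ht0, ht1⟩ := ht
  set a : ℝ := Real.cos t with ha_def
  set b : ℝ := Real.sin t with hb_def
  set c : B := a • F + b • F' with hc_def
  have hpi := Real.pi_pos
  have ha : 0 ≤ a := Real.cos_nonneg_of_mem_Icc ⟨by linarith, ht1⟩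
  have hb : 0 ≤ b := Real.sin_nonneg_of_nonneg_of_le_pi ht0 (by linarith)
  have hab1 : a ^ 2 + b ^ 2 = 1 := by
    rw [ha_def, hb_def]; exact Real.cos_sq_add_sin_sq t
  have habhalf : a * b ≤ 1 / 2 := by nlinarith [sq_nonneg (a - b)]
  have habnn : 0 ≤ a * b := mul_nonneg ha hb
  -- self-adjointness
  have hsa : IsSelfAdjoint c := (IsSelfAdjoint.smul (star_trivial a) hF).add (IsSelfAdjoint.smul (star_trivial b) hF')
  -- square computation
  have hFF : F * F = (1 : B) := by rw [← sq, hF2]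
  have hFF' : F' * F' = (1 : B) := by rw [← sq, hF'2]
  have hsq : c ^ 2 = (1 : B) + (a * b) • (F * F' + F' * F) := by
    have h' : c ^ 2 = (a ^ 2 + b ^ 2) • (1 : B) + (a * b) • (F * F' + F' * F) := by
      rw [hc_def, sq, add_mul, mul_add, mul_add, smul_mul_smul_comm, smul_mul_smul_comm,
        smul_mul_smul_comm, smul_mul_smul_comm, hFF, hFF']
      module
    rw [h', hab1, one_smul]
  -- anticommutator lower bound
  have hmu_le : mu • (1 : B) ≤ F * F' + F' * F := by
    refine le_trans ?_ hanti
    have : (0 : B) ≤ (lam - mu) • (1 : B) := aux_smul_one_nonneg (by linarith)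
    have h := add_le_add_right this (mu • (1 : B))
    simpa [← add_smul] using h
  -- the key order inequality
  have key : (r ^ 2) • (1 : B) ≤ c ^ 2 := by
    have h1' : (0 : B) ≤ (a * b) • (F * F' + F' * F - mu • (1 : B)) :=
      aux_smul_nonneg habnn (sub_nonneg.mpr hmu_le)
    have h2' : (0 : B) ≤ (mu * (a * b) - mu / 2) • (1 : B) :=
      aux_smul_one_nonneg (by nlinarith)
    have hsum := add_nonneg h1' h2'
    have heq : (a * b) • (F * F' + F' * F - mu • (1 : B)) +
        (mu * (a * b) - mu / 2) • (1 : B)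
        = ((1 : B) + (a * b) • (F * F' + F' * F)) - (1 + mu / 2) • (1 : B) := by
      module
    rw [heq] at hsum
    rw [hsq, hr2]
    exact sub_nonneg.mp hsum
  -- spectral gap
  have hgap : ∀ x ∈ spectrum ℝ c, x ∉ Set.Ioo (-r) r := by
    intro x hx hx'
    obtain ⟨hx1, hx2⟩ := hx'
    have hd : (0 : B) ≤ c ^ 2 - (r ^ 2) • (1 : B) := sub_nonneg.mpr key
    -- x^2 - r^2 ∈ spectrum of c^2 - r^2•1
    have hmem : x ^ 2 - r ^ 2 ∈ spectrum ℝ (c ^ 2 - (r ^ 2) • (1 : B)) := by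
      have hsub := spectrum.subset_polynomial_aeval c
        (Polynomial.X ^ 2 - Polynomial.C (r ^ 2))
      have himg : x ^ 2 - r ^ 2 ∈
          (fun k => Polynomial.eval k (Polynomial.X ^ 2 - Polynomial.C (r ^ 2))) ''
            spectrum ℝ c := ⟨x, hx, by simp⟩
      have haeval : (Polynomial.aeval c) (Polynomial.X ^ 2 - Polynomial.C (r ^ 2))
          = c ^ 2 - (r ^ 2) • (1 : B) := by
        simp only [map_sub, map_pow, Polynomial.aeval_X, Polynomial.aeval_C,
          Algebra.algebraMap_eq_smul_one]
        rw [smul_pow, one_pow]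
      have hmem' := hsub himg
      rwa [haeval] at hmem'
    have := spectrum_nonneg_of_nonneg hd hmem
    nlinarith
  have h0 : (0 : ℝ) ∉ spectrum ℝ c := fun h =>
    hgap 0 h ⟨by linarith, hrpos⟩
  have hunit : IsUnit c := by
    have := spectrum.notMem_iff.mp h0
    simpa using this.neg
  refine ⟨hsa, key, hunit, ?_⟩
  ext x
  simp only [Set.mem_inter_iff, Set.mem_empty_iff_false, iff_false, not_and]
  exact fun hx => hgap x hx
end
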